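/- Let λ > 0, 0 < d_H ≤ λ/2, 0 < d_V ≤ λ/2, and integers N_H ≥ 2, N_V ≥ 2, and set N = N_H N_V. Define grid positions u_n = (0, i(n) d_H, j(n) d_V) ∈ ℝ³ for n = 1, …, N, where i(n) = (n−1) mod N_H and j(n) = ⌊(n−1)/N_H⌋. Then the N × N matrix R with entries [R]_{n,m} = sinc(2‖u_n − u_m‖/λ) is not the identity matrix; that is, there exist indices n ≠ m with sinc(2‖u_n − u_m‖/λ) ≠ 0. -/

import Mathlib

/- The zeros of `sinc` are exactly the nonzero integers. Horizontally and vertically adjacent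
elements are at normalized distances `a = 2 d_H / λ` and `b = 2 d_V / λ` in `(0, 1]`, so one of
them gives a nonzero correlation unless `a = b = 1`; then the diagonal neighbours are at
normalized distance `√2`, which is irrational. -/

open Real

/-- The normalized sinc function: `sinc x = sin(π x)/(π x)` for `x ≠ 0`, `sinc 0 = 1`. -/
noncomputable def sinc (x : ℝ) : ℝ :=
  if x = 0 then 1 else Real.sin (Real.pi * x) / (Real.pi * x)

/-- Position of the `n`-th RIS element (`n = 1, …, N`, indexed row by row) on a
rectangular grid in the `x = 0` plane of `ℝ³`, with horizontal spacing `dH`,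
vertical spacing `dV` and `NH` elements per row:
`u n = (0, ((n−1) mod NH) dH, (⌊(n−1)/NH⌋) dV)`. -/
noncomputable def risPos (dH dV : ℝ) (NH : ℕ) (n : ℕ) : EuclideanSpace ℝ (Fin 3) :=
  (WithLp.equiv 2 (Fin 3 → ℝ)).symm
    ![0, (((n - 1) % NH : ℕ) : ℝ) * dH, (((n - 1) / NH : ℕ) : ℝ) * dV]


lemma sinc_ne_zero_of_forall_ne_intCast {x : ℝ} (h : ∀ k : ℤ, k ≠ 0 → x ≠ k) :
    _root_.sinc x ≠ 0 := by
  by_cases hx : x = 0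
  · simp [_root_.sinc, hx]
  rw [_root_.sinc, if_neg hx]
  refine div_ne_zero (fun hsin => ?_) (mul_ne_zero Real.pi_ne_zero hx)
  obtain ⟨k, hk⟩ := Real.sin_eq_zero_iff.mp hsin
  have hxk : x = k := mul_left_cancel₀ Real.pi_ne_zero (by linarith)
  exact h k (by rintro rfl; simp [hxk] at hx) hxk

lemma sinc_ne_zero_of_nonneg_of_lt_one {x : ℝ} (h0 : 0 ≤ x) (h1 : x < 1) :
    _root_.sinc x ≠ 0 :=
  sinc_ne_zero_of_forall_ne_intCast fun k hk hxk => by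
    rw [hxk] at h0 h1
    have : 0 ≤ k := by exact_mod_cast h0
    have : k < 1 := by exact_mod_cast h1
    omega

lemma sinc_ne_zero_of_irrational {x : ℝ} (h : Irrational x) : _root_.sinc x ≠ 0 :=
  sinc_ne_zero_of_forall_ne_intCast fun k _ => h.ne_int k

lemma sinc_two_mul_div_ne_zero_of_lt {d lam : ℝ} (hd : 0 ≤ d) (h : d < lam / 2) :
    _root_.sinc (2 * d / lam) ≠ 0 :=
  sinc_ne_zero_of_nonneg_of_lt_one (div_nonneg (by positivity) (by linarith))
    (by rw [div_lt_one (by linarith)]; linarith)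

lemma risPos_one_add_add_mul (dH dV : ℝ) {NH i : ℕ} (j : ℕ) (hi : i < NH) :
    risPos dH dV NH (1 + i + NH * j) =
      (WithLp.equiv 2 (Fin 3 → ℝ)).symm ![0, (i : ℝ) * dH, (j : ℝ) * dV] := by
  have hidx : 1 + i + NH * j - 1 = i + NH * j := by omega
  simp [risPos, hidx, Nat.add_mul_mod_self_left, Nat.mod_eq_of_lt hi,
    Nat.add_mul_div_left _ _ (by omega : 0 < NH), Nat.div_eq_of_lt hi]

lemma norm_risPos_one_sub_risPos (dH dV : ℝ) {NH i : ℕ} (j : ℕ) (hi : i < NH) :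
    ‖risPos dH dV NH 1 - risPos dH dV NH (1 + i + NH * j)‖ =
      √(((i : ℝ) * dH) ^ 2 + ((j : ℝ) * dV) ^ 2) := by
  rw [risPos_one_add_add_mul dH dV j hi, EuclideanSpace.norm_eq]
  simp [risPos, Fin.sum_univ_three]

lemma exists_sinc_ne_zero_of_offset {lam dH dV : ℝ} {NH NV i j : ℕ} (hi : i < NH) (hj : j < NV)
    (hij : i + j ≠ 0) (h : _root_.sinc (2 * √(((i : ℝ) * dH) ^ 2 + ((j : ℝ) * dV) ^ 2) / lam) ≠ 0) :
    ∃ n m : ℕ, 1 ≤ n ∧ n ≤ NH * NV ∧ 1 ≤ m ∧ m ≤ NH * NV ∧ n ≠ m ∧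
      _root_.sinc (2 * ‖risPos dH dV NH n - risPos dH dV NH m‖ / lam) ≠ 0 := by
  have hm : 1 + i + NH * j ≤ NH * NV :=
    calc 1 + i + NH * j ≤ NH * (j + 1) := by rw [mul_add]; omega
      _ ≤ NH * NV := Nat.mul_le_mul_left NH hj
  have hne : 0 < i + NH * j := by
    rcases Nat.eq_zero_or_pos i with rfl | _
    · exact Nat.add_pos_right 0 (Nat.mul_pos (by omega) (by omega))
    · omega
  refine ⟨1, 1 + i + NH * j, le_rfl, by omega, by omega, hm, by omega, ?_⟩
  rwa [norm_risPos_one_sub_risPos dH dV j hi]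

theorem stmt_6_general (lam dH dV : ℝ) (NH NV : ℕ)
    (hdH : 0 < dH) (hdH' : dH ≤ lam / 2)
    (hdV : 0 < dV) (hdV' : dV ≤ lam / 2) (hNH : 2 ≤ NH) (hNV : 2 ≤ NV) :
    ∃ n m : ℕ, 1 ≤ n ∧ n ≤ NH * NV ∧ 1 ≤ m ∧ m ≤ NH * NV ∧ n ≠ m ∧
      _root_.sinc (2 * ‖risPos dH dV NH n - risPos dH dV NH m‖ / lam) ≠ 0 := by
  rcases hdH'.lt_or_eq with hH | hH
  · refine exists_sinc_ne_zero_of_offset (i := 1) (j := 0) (by omega) (by omega) (by omega) ?_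
    simpa [Real.sqrt_sq hdH.le] using sinc_two_mul_div_ne_zero_of_lt hdH.le hH
  rcases hdV'.lt_or_eq with hV | hV
  · refine exists_sinc_ne_zero_of_offset (i := 0) (j := 1) (by omega) (by omega) (by omega) ?_
    simpa [Real.sqrt_sq hdV.le] using sinc_two_mul_div_ne_zero_of_lt hdV.le hV
  refine exists_sinc_ne_zero_of_offset (i := 1) (j := 1) (by omega) (by omega) (by omega) ?_
  have hlam : 0 < lam := by linarith
  have harg : 2 * √(((1 : ℕ) * dH) ^ 2 + ((1 : ℕ) * dV) ^ 2) / lam = √2 := by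
    rw [hH, hV, Nat.cast_one, one_mul, ← two_mul, mul_comm, Real.sqrt_mul (by positivity),
      Real.sqrt_sq (by positivity)]
    field_simp
  rw [harg]
  exact sinc_ne_zero_of_irrational irrational_sqrt_two

/-- For any rectangular RIS with sub-half-wavelength spacings
`0 < d_H ≤ λ/2`, `0 < d_V ≤ λ/2` and at least two rows and two columns, the
spatial correlation matrix `[R]_{n,m} = sinc(2‖u_n − u_m‖/λ)` is not the
identity: there exist distinct indices `n ≠ m` in `{1, …, N}` with
`sinc(2‖u_n − u_m‖/λ) ≠ 0`. -/
theorem stmt_6 (lam dH dV : ℝ) (NH NV : ℕ)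
    (hlam : 0 < lam) (hdH : 0 < dH) (hdH' : dH ≤ lam / 2)
    (hdV : 0 < dV) (hdV' : dV ≤ lam / 2) (hNH : 2 ≤ NH) (hNV : 2 ≤ NV) :
    ∃ n m : ℕ, 1 ≤ n ∧ n ≤ NH * NV ∧ 1 ≤ m ∧ m ≤ NH * NV ∧ n ≠ m ∧
      _root_.sinc (2 * ‖risPos dH dV NH n - risPos dH dV NH m‖ / lam) ≠ 0 :=
  stmt_6_general lam dH dV NH NV hdH hdH' hdV hdV' hNH hNV
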